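/- arXiv:2208.06666 — 2 statements merged into one kernel-verified Lean document; each statement's English description precedes it below -/
import Mathlib

section
/- Fix a > 0, P_e ≠ 0, D_a = 0, and N ∈ ℕ. For every polynomial q of degree ≤ N there exists a unique polynomial p in the span of {(x/a)^j : 1 ≤ j ≤ N+1} (i.e., with zero constant term and degree ≤ N+1) such that P_e p' − p'' = q. -/
/-!
Write `L p = Pe p' - p''`. On polynomials `L` lowers the degree by one, and multiplying by `X`
first gives an endomorphism `r ↦ L (X r)` of the polynomials of degree `≤ N`. It is injective:
`L p = 0` says `(Pe - D) p' = 0`, and comparing leading coefficients forces `p' = 0`, so `p` is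
constant, hence zero once `p(0) = 0`. By finite dimensionality it is therefore surjective, which
gives existence; injectivity of `L` on polynomials vanishing at `0` gives uniqueness.
-/

open Polynomial

namespace Polynomial

section CommRing

variable {R : Type*} [CommRing R]

lemma mem_degreeLT_succ_iff_natDegree_le {p : R[X]} {n : ℕ} :
    p ∈ degreeLT R (n + 1) ↔ p.natDegree ≤ n := by
  rw [degreeLT_succ_eq_degreeLE, mem_degreeLE, natDegree_le_iff_degree_le]

lemma natDegree_X_mul_le_of_le {r : R[X]} {n : ℕ} (hr : r.natDegree ≤ n) :
    (X * r).natDegree ≤ n + 1 :=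
  (natDegree_mul_le_of_le natDegree_X_le hr).trans_eq (add_comm 1 n)

noncomputable def convectionDiffusion (Pe : R) : R[X] →ₗ[R] R[X] :=
  Pe • derivative - derivative ∘ₗ derivative

@[simp]
lemma convectionDiffusion_apply (Pe : R) (p : R[X]) :
    convectionDiffusion Pe p = C Pe * derivative p - derivative (derivative p) := by
  simp [convectionDiffusion, smul_eq_C_mul]

lemma natDegree_convectionDiffusion_le (Pe : R) {p : R[X]} {n : ℕ} (hp : p.natDegree ≤ n + 1) :
    (convectionDiffusion Pe p).natDegree ≤ n := by
  have hp' : (derivative p).natDegree ≤ n := (natDegree_derivative_le p).trans (by omega)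
  rw [convectionDiffusion_apply]
  refine (natDegree_sub_le _ _).trans (max_le ((natDegree_C_mul_le _ _).trans hp') ?_)
  exact (natDegree_derivative_le _).trans (by omega)

lemma eq_zero_of_C_mul_sub_derivative_eq_zero [NoZeroDivisors R] {c : R} (hc : c ≠ 0) {g : R[X]}
    (h : C c * g - derivative g = 0) : g = 0 := by
  have hlead := congrArg (coeff · g.natDegree) h
  simp only [coeff_sub, coeff_C_mul, coeff_derivative, coeff_zero,
    coeff_eq_zero_of_natDegree_lt (Nat.lt_succ_self _), zero_mul, sub_zero] at hlead
  exact leadingCoeff_eq_zero.mp ((mul_eq_zero.mp hlead).resolve_left hc)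

lemma eq_zero_of_convectionDiffusion_eq_zero [IsDomain R] [CharZero R] {Pe : R} (hPe : Pe ≠ 0)
    {p : R[X]} (hp : convectionDiffusion Pe p = 0) (hp0 : p.coeff 0 = 0) : p = 0 := by
  have hp' : derivative p = 0 :=
    eq_zero_of_C_mul_sub_derivative_eq_zero hPe (by rwa [convectionDiffusion_apply] at hp)
  rw [eq_C_of_natDegree_eq_zero (derivative_eq_zero.mp hp'), hp0, C_0]

end CommRing

section Field

variable {K : Type*} [Field K] [CharZero K]

noncomputable def convectionDiffusionMulX (Pe : K) (n : ℕ) : Module.End K (degreeLT K (n + 1)) :=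
  (convectionDiffusion Pe ∘ₗ LinearMap.mulLeft K X).restrict fun r hr => by
    rw [mem_degreeLT_succ_iff_natDegree_le] at hr ⊢
    exact natDegree_convectionDiffusion_le Pe (natDegree_X_mul_le_of_le hr)

lemma convectionDiffusionMulX_injective {Pe : K} (hPe : Pe ≠ 0) (n : ℕ) :
    Function.Injective (convectionDiffusionMulX Pe n) := by
  rw [← LinearMap.ker_eq_bot, LinearMap.ker_eq_bot']
  intro r hr
  have hXr : X * (r : K[X]) = 0 :=
    eq_zero_of_convectionDiffusion_eq_zero hPe (congrArg Subtype.val hr) (coeff_X_mul_zero _)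
  exact Subtype.ext ((mul_eq_zero.mp hXr).resolve_left X_ne_zero)

theorem exists_convectionDiffusion_eq {Pe : K} (hPe : Pe ≠ 0) {n : ℕ} {q : K[X]}
    (hq : q.natDegree ≤ n) :
    ∃ p : K[X], p.coeff 0 = 0 ∧ p.natDegree ≤ n + 1 ∧ convectionDiffusion Pe p = q := by
  obtain ⟨⟨r, hr⟩, hrq⟩ := LinearMap.injective_iff_surjective.mp
    (convectionDiffusionMulX_injective hPe n) ⟨q, mem_degreeLT_succ_iff_natDegree_le.mpr hq⟩
  refine ⟨X * r, coeff_X_mul_zero r, ?_, congrArg Subtype.val hrq⟩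
  exact natDegree_X_mul_le_of_le (mem_degreeLT_succ_iff_natDegree_le.mp hr)

end Field

end Polynomial

open Polynomial in
theorem convection_diffusion_polynomial_solution_general (Pe : ℝ)
    (hPe : Pe ≠ 0) (N : ℕ) :
    ∀ q : ℝ[X], q.natDegree ≤ N →
      ∃! p : ℝ[X], p.coeff 0 = 0 ∧ p.natDegree ≤ N + 1 ∧
        C Pe * derivative p - derivative (derivative p) = q := by
  intro q hq
  simp only [← convectionDiffusion_apply]
  obtain ⟨p, hp0, hpN, hpq⟩ := exists_convectionDiffusion_eq hPe hq
  refine ⟨p, ⟨hp0, hpN, hpq⟩, fun p' ⟨hp'0, _, hp'q⟩ => sub_eq_zero.mp ?_⟩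
  refine eq_zero_of_convectionDiffusion_eq_zero hPe ?_ (by rw [coeff_sub, hp'0, hp0, sub_zero])
  rw [map_sub, hp'q, hpq, sub_self]

open Polynomial in
theorem convection_diffusion_polynomial_solution (a Pe : ℝ) (ha : a > 0)
    (hPe : Pe ≠ 0) (N : ℕ) :
    ∀ q : ℝ[X], q.natDegree ≤ N →
      ∃! p : ℝ[X], p.coeff 0 = 0 ∧ p.natDegree ≤ N + 1 ∧
        C Pe * derivative p - derivative (derivative p) = q :=
  convection_diffusion_polynomial_solution_general Pe hPe N
end

section
/- For β_n > 0, P_e1, P_e2, P_e, D_a ∈ ℝ such that γ₁ = −P_e1² − 4β_n² + 4P_e D_a and γ₂ = −4P_e2 β_n are not both zero, write the characteristic roots as η₁ = (−α₁ + α₃) − iα₂ and η₂ = (−α₁ − α₃) + iα₂. Then the real functions u₁(x₁,x₂) = exp((−α₁+α₃)x₁)·cos(β_n x₂ − α₂ x₁) and u₂(x₁,x₂) = exp((−α₁+α₃)x₁)·sin(β_n x₂ − α₂ x₁) satisfy the homogeneous two-dimensional convection-diffusion-reaction equation P_e1 u_{x₁} + P_e2 u_{x₂} − Δu − P_e D_a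 u = 0. -/
/-!
With `η = (-α₁ + α₃) - α₂ i` and `ζ = βₙ i` we have `u₁ + i u₂ = exp (η x₁ + ζ x₂)`. On such an
exponential mode the operator acts as multiplication by its symbol
`Pe1 η + Pe2 ζ - η² - ζ² - Pe Da`, which is minus the characteristic polynomial in `hroot`, hence
zero. Since the operator has real coefficients it commutes with every `ℝ`-linear map `ℂ → ℝ`, in
particular with `re` and `im`.
-/

open Complex

noncomputable def convDiffReact (a b k : ℝ) (u : ℝ → ℝ → ℝ) (x₁ x₂ : ℝ) : ℝ :=
  a * deriv (fun t => u t x₂) x₁ + b * deriv (fun t => u x₁ t) x₂ -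
    (deriv (deriv fun t => u t x₂) x₁ + deriv (deriv fun t => u x₁ t) x₂) - k * u x₁ x₂

theorem hasDerivAt_mul_cexp_ofReal (κ η c : ℂ) (t : ℝ) :
    HasDerivAt (fun t : ℝ => κ * cexp (η * t + c)) (κ * η * cexp (η * t + c)) t := by
  have h : HasDerivAt (fun z : ℂ => κ * cexp (η * z + c)) (κ * (cexp (η * t + c) * η)) t :=
    ((((hasDerivAt_id (t : ℂ)).const_mul η).add_const c).cexp).const_mul κ |>.congr_deriv
      (by simp)
  exact h.comp_ofReal.congr_deriv (by ring)

theorem deriv_clm_mul_cexp_ofReal {F : Type*} [NormedAddCommGroup F] [NormedSpace ℝ F]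
    (L : ℂ →L[ℝ] F) (κ η c : ℂ) :
    deriv (fun t : ℝ => L (κ * cexp (η * t + c))) = fun t : ℝ => L (κ * η * cexp (η * t + c)) :=
  funext fun t => (L.hasFDerivAt.comp_hasDerivAt t (hasDerivAt_mul_cexp_ofReal κ η c t)).deriv

theorem convDiffReact_clm_cexp (L : ℂ →L[ℝ] ℝ) (a b k : ℝ) (η ζ : ℂ) (x₁ x₂ : ℝ) :
    convDiffReact a b k (fun x₁ x₂ => L (cexp (η * x₁ + ζ * x₂))) x₁ x₂ =
      L ((a * η + b * ζ - η ^ 2 - ζ ^ 2 - k) * cexp (η * x₁ + ζ * x₂)) := by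
  have d₁ := deriv_clm_mul_cexp_ofReal L 1 η (ζ * x₂)
  have d₂ := deriv_clm_mul_cexp_ofReal L 1 ζ (η * x₁)
  simp only [one_mul] at d₁ d₂
  simp only [convDiffReact, add_comm (η * (x₁ : ℂ)), d₁, d₂, deriv_clm_mul_cexp_ofReal]
  rw [add_comm (ζ * (x₂ : ℂ))]
  set E := cexp (η * x₁ + ζ * x₂)
  have hsplit : (a * η + b * ζ - η ^ 2 - ζ ^ 2 - k) * E =
      a • (η * E) + b • (ζ * E) - (η * η * E + ζ * ζ * E) - k • E := by
    simp only [Complex.real_smul]; ring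
  simp only [hsplit, map_add, map_sub, map_smul, smul_eq_mul]

theorem convDiffReact_clm_cexp_eq_zero (L : ℂ →L[ℝ] ℝ) {a b k : ℝ} {η ζ : ℂ}
    (hsymbol : a * η + b * ζ - η ^ 2 - ζ ^ 2 - k = 0) (x₁ x₂ : ℝ) :
    convDiffReact a b k (fun x₁ x₂ => L (cexp (η * x₁ + ζ * x₂))) x₁ x₂ = 0 := by
  rw [convDiffReact_clm_cexp, hsymbol, zero_mul, map_zero]

theorem real_homogeneous_solutions_2d_general (Pe1 Pe2 Pe Da βn α₁ α₂ α₃ : ℝ)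
    (hroot : (((-α₁ + α₃ : ℝ) : ℂ) - α₂ * Complex.I) ^ 2
      - (Pe1 : ℂ) * (((-α₁ + α₃ : ℝ) : ℂ) - α₂ * Complex.I)
      + (-(βn : ℂ) ^ 2 + (Pe : ℂ) * Da - Complex.I * Pe2 * βn) = 0) :
    let u₁ : ℝ → ℝ → ℝ := fun x₁ x₂ =>
      Real.exp ((-α₁ + α₃) * x₁) * Real.cos (βn * x₂ - α₂ * x₁)
    let u₂ : ℝ → ℝ → ℝ := fun x₁ x₂ =>
      Real.exp ((-α₁ + α₃) * x₁) * Real.sin (βn * x₂ - α₂ * x₁)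
    (∀ x₁ x₂ : ℝ,
      Pe1 * deriv (fun t => u₁ t x₂) x₁ + Pe2 * deriv (fun t => u₁ x₁ t) x₂ -
      (deriv (deriv (fun t => u₁ t x₂)) x₁ + deriv (deriv (fun t => u₁ x₁ t)) x₂) -
      Pe * Da * u₁ x₁ x₂ = 0) ∧
    (∀ x₁ x₂ : ℝ,
      Pe1 * deriv (fun t => u₂ t x₂) x₁ + Pe2 * deriv (fun t => u₂ x₁ t) x₂ -
      (deriv (deriv (fun t => u₂ t x₂)) x₁ + deriv (deriv (fun t => u₂ x₁ t)) x₂) -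
      Pe * Da * u₂ x₁ x₂ = 0) := by
  intro u₁ u₂
  set η : ℂ := ((-α₁ + α₃ : ℝ) : ℂ) - α₂ * I
  set ζ : ℂ := βn * I
  have hmode : ∀ x₁ x₂ : ℝ, (η * x₁ + ζ * x₂).re = (-α₁ + α₃) * x₁ ∧
      (η * x₁ + ζ * x₂).im = βn * x₂ - α₂ * x₁ := fun x₁ x₂ =>
    ⟨by simp [η, ζ], by simp [η, ζ]; ring⟩
  have hu₁ : u₁ = fun x₁ x₂ : ℝ => reCLM (cexp (η * x₁ + ζ * x₂)) := by
    funext x₁ x₂; simp only [u₁, reCLM_apply, exp_re, hmode]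
  have hu₂ : u₂ = fun x₁ x₂ : ℝ => imCLM (cexp (η * x₁ + ζ * x₂)) := by
    funext x₁ x₂; simp only [u₂, imCLM_apply, exp_im, hmode]
  have hsymbol : Pe1 * η + Pe2 * ζ - η ^ 2 - ζ ^ 2 - (Pe * Da : ℝ) = 0 := by
    simp only [ζ]; push_cast; linear_combination -hroot - (βn : ℂ) ^ 2 * I_sq
  rw [hu₁, hu₂]
  exact ⟨convDiffReact_clm_cexp_eq_zero reCLM hsymbol, convDiffReact_clm_cexp_eq_zero imCLM hsymbol⟩

theorem real_homogeneous_solutions_2d (Pe1 Pe2 Pe Da βn α₁ α₂ α₃ : ℝ)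
    (hβ : βn > 0)
    (hγ : ¬(-Pe1 ^ 2 - 4 * βn ^ 2 + 4 * Pe * Da = 0 ∧ -4 * Pe2 * βn = 0))
    (hα₁ : α₁ = -Pe1 / 2)
    (hroot : (((-α₁ + α₃ : ℝ) : ℂ) - α₂ * Complex.I) ^ 2
      - (Pe1 : ℂ) * (((-α₁ + α₃ : ℝ) : ℂ) - α₂ * Complex.I)
      + (-(βn : ℂ) ^ 2 + (Pe : ℂ) * Da - Complex.I * Pe2 * βn) = 0) :
    let u₁ : ℝ → ℝ → ℝ := fun x₁ x₂ =>
      Real.exp ((-α₁ + α₃) * x₁) * Real.cos (βn * x₂ - α₂ * x₁)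
    let u₂ : ℝ → ℝ → ℝ := fun x₁ x₂ =>
      Real.exp ((-α₁ + α₃) * x₁) * Real.sin (βn * x₂ - α₂ * x₁)
    (∀ x₁ x₂ : ℝ,
      Pe1 * deriv (fun t => u₁ t x₂) x₁ + Pe2 * deriv (fun t => u₁ x₁ t) x₂ -
      (deriv (deriv (fun t => u₁ t x₂)) x₁ + deriv (deriv (fun t => u₁ x₁ t)) x₂) -
      Pe * Da * u₁ x₁ x₂ = 0) ∧
    (∀ x₁ x₂ : ℝ,
      Pe1 * deriv (fun t => u₂ t x₂) x₁ + Pe2 * deriv (fun t => u₂ x₁ t) x₂ -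
      (deriv (deriv (fun t => u₂ t x₂)) x₁ + deriv (deriv (fun t => u₂ x₁ t)) x₂) -
      Pe * Da * u₂ x₁ x₂ = 0) :=
  real_homogeneous_solutions_2d_general Pe1 Pe2 Pe Da βn α₁ α₂ α₃ hroot
end
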